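/- arXiv:2306.13245 — 2 statements merged into one kernel-verified Lean document; each statement's English description precedes it below -/
import Mathlib

section
/- Let f = (f11, f12, f22) ∈ C²_c(S²; D1). Then Lf(x) = 0 for all x ∈ ℝ² if and only if there exists a continuously differentiable function φ : ℝ² → ℝ with gradient ∇φ = (u1² f11 + u2² f22, 2 u1² f12) on ℝ². (Kernel description of the longitudinal V-line transform.) -/
noncomputable section

open MeasureTheory

/-- The divergent beam transform `X_w h (x) = ∫₀^∞ h(x + t w) dt`. -/
def Xbeam (w : ℝ × ℝ) (h : ℝ × ℝ → ℝ) (x : ℝ × ℝ) : ℝ :=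
  ∫ t in Set.Ioi (0 : ℝ), h (x + t • w)

/-- The k-th moment divergent beam transform `X_w^k h (x) = ∫₀^∞ t^k h(x + t w) dt`. -/
def Xmom (k : ℕ) (w : ℝ × ℝ) (h : ℝ × ℝ → ℝ) (x : ℝ × ℝ) : ℝ :=
  ∫ t in Set.Ioi (0 : ℝ), t ^ k * h (x + t • w)

/-- The directional derivative `D_w h = w ⋅ ∇h`. -/
def Dir (w : ℝ × ℝ) (h : ℝ × ℝ → ℝ) (x : ℝ × ℝ) : ℝ :=
  fderiv ℝ h x w

/-- Support contained in the open unit disc `D1`. -/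
def SuppInDisc (h : ℝ × ℝ → ℝ) : Prop :=
  ∀ x : ℝ × ℝ, 1 ≤ x.1 ^ 2 + x.2 ^ 2 → h x = 0

/-- The longitudinal V-line transform. -/
def VlineL (u1 u2 : ℝ) (f11 f12 f22 : ℝ × ℝ → ℝ) : ℝ × ℝ → ℝ :=
  Xbeam (u1, u2) (fun y => u1 ^ 2 * f11 y + 2 * u1 * u2 * f12 y + u2 ^ 2 * f22 y)
    + Xbeam (-u1, u2) (fun y => u1 ^ 2 * f11 y - 2 * u1 * u2 * f12 y + u2 ^ 2 * f22 y)

/-- The transverse V-line transform. -/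
def VlineT (u1 u2 : ℝ) (f11 f12 f22 : ℝ × ℝ → ℝ) : ℝ × ℝ → ℝ :=
  Xbeam (u1, u2) (fun y => u2 ^ 2 * f11 y - 2 * u1 * u2 * f12 y + u1 ^ 2 * f22 y)
    + Xbeam (-u1, u2) (fun y => u2 ^ 2 * f11 y + 2 * u1 * u2 * f12 y + u1 ^ 2 * f22 y)

/-- The mixed V-line transform. -/
def VlineM (u1 u2 : ℝ) (f11 f12 f22 : ℝ × ℝ → ℝ) : ℝ × ℝ → ℝ :=
  Xbeam (u1, u2) (fun y => -(u1 * u2) * f11 y + (u1 ^ 2 - u2 ^ 2) * f12 y + u1 * u2 * f22 y)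
    + Xbeam (-u1, u2) (fun y => u1 * u2 * f11 y + (u1 ^ 2 - u2 ^ 2) * f12 y - u1 * u2 * f22 y)

/-- The k-th moment longitudinal V-line transform. -/
def VlineLk (k : ℕ) (u1 u2 : ℝ) (f11 f12 f22 : ℝ × ℝ → ℝ) : ℝ × ℝ → ℝ :=
  Xmom k (u1, u2) (fun y => u1 ^ 2 * f11 y + 2 * u1 * u2 * f12 y + u2 ^ 2 * f22 y)
    + Xmom k (-u1, u2) (fun y => u1 ^ 2 * f11 y - 2 * u1 * u2 * f12 y + u2 ^ 2 * f22 y)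

/-- The k-th moment transverse V-line transform. -/
def VlineTk (k : ℕ) (u1 u2 : ℝ) (f11 f12 f22 : ℝ × ℝ → ℝ) : ℝ × ℝ → ℝ :=
  Xmom k (u1, u2) (fun y => u2 ^ 2 * f11 y - 2 * u1 * u2 * f12 y + u1 ^ 2 * f22 y)
    + Xmom k (-u1, u2) (fun y => u2 ^ 2 * f11 y + 2 * u1 * u2 * f12 y + u1 ^ 2 * f22 y)

/-- The k-th moment mixed V-line transform. -/
def VlineMk (k : ℕ) (u1 u2 : ℝ) (f11 f12 f22 : ℝ × ℝ → ℝ) : ℝ × ℝ → ℝ :=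
  Xmom k (u1, u2) (fun y => -(u1 * u2) * f11 y + (u1 ^ 2 - u2 ^ 2) * f12 y + u1 * u2 * f22 y)
    + Xmom k (-u1, u2) (fun y => u1 * u2 * f11 y + (u1 ^ 2 - u2 ^ 2) * f12 y - u1 * u2 * f22 y)

/-!
Write `g_w = ∑ fᵢⱼ wᵢ wⱼ`, so that `Lf = X_u g_u + X_v g_v`. The fundamental theorem of calculus
along the ray `t ↦ x + t w` gives `D_w X_w h = -h` for compactly supported `C¹` functions `h`, and
`X_w (D_w φ) = c - φ` when `φ` is eventually equal to `c` along the ray. For a potential `φ`, the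
gradient condition says exactly `D_u φ = u₁ g_u` and `D_v φ = -u₁ g_v`.

If `Lf = 0`, then `φ = -u₁ X_u g_u = u₁ X_v g_v` has these directional derivatives. Conversely, a
potential has zero gradient on the half-plane `y₂ > 1` above the disc, hence is a constant `c`
there; both rays enter that half-plane, so `u₁ X_u g_u = c - φ = -u₁ X_v g_v`.
-/

open Set Filter Topology

section Ray

variable {E F : Type*} [NormedAddCommGroup E] [NormedSpace ℝ E] [NormedAddCommGroup F]

theorem HasCompactSupport.exists_eventually_apply_add_smul_eq_zero {h : E → F}
    (hh : HasCompactSupport h) {w : E} (hw : w ≠ 0) (x₀ : E) :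
    ∃ T : ℝ, 0 ≤ T ∧ ∀ᶠ x in 𝓝 x₀, ∀ t, T ≤ t → h (x + t • w) = 0 := by
  obtain ⟨R, hR⟩ := hh.isCompact.isBounded.subset_closedBall 0
  have hw' : 0 < ‖w‖ := norm_pos_iff.2 hw
  refine ⟨(|R| + ‖x₀‖ + 1) / ‖w‖, by positivity, ?_⟩
  filter_upwards [Metric.ball_mem_nhds x₀ one_pos] with x hx t ht
  refine image_eq_zero_of_notMem_tsupport fun hmem => ?_
  have hle : ‖x + t • w‖ ≤ R := by simpa using hR hmem
  have hlarge : |R| + ‖x₀‖ + 1 ≤ t * ‖w‖ := (div_le_iff₀ hw').1 ht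
  have hxnorm : ‖x‖ < ‖x₀‖ + 1 := by
    have := norm_le_norm_add_norm_sub' x x₀
    rw [Metric.mem_ball, dist_eq_norm] at hx
    linarith
  have htw : ‖t • w‖ ≤ ‖x + t • w‖ + ‖x‖ := by
    simpa using norm_sub_le (x + t • w) x
  rw [norm_smul, Real.norm_of_nonneg (le_trans (by positivity) ht)] at htw
  linarith [le_abs_self R]

variable [NormedSpace ℝ F]

theorem hasDerivAt_comp_add_smul {φ : E → F} {x w : E} {t : ℝ}
    (hφ : DifferentiableAt ℝ φ (x + t • w)) :
    HasDerivAt (fun s : ℝ => φ (x + s • w)) (fderiv ℝ φ (x + t • w) w) t := by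
  have hline : HasDerivAt (fun s : ℝ => x + s • w) w t := by
    simpa using ((hasDerivAt_id t).smul_const w).const_add x
  exact hφ.hasFDerivAt.comp_hasDerivAt t hline

theorem integral_fderiv_apply_add_smul [CompleteSpace F] {φ : E → F} (hφ : ContDiff ℝ 1 φ)
    (x w : E) (a b : ℝ) :
    ∫ t in a..b, fderiv ℝ φ (x + t • w) w = φ (x + b • w) - φ (x + a • w) := by
  have hd : Continuous (fderiv ℝ φ) := hφ.continuous_fderiv one_ne_zero
  exact intervalIntegral.integral_eq_sub_of_hasDerivAt
    (fun t _ => hasDerivAt_comp_add_smul (hφ.differentiable one_ne_zero _))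
    (Continuous.intervalIntegrable (by fun_prop) _ _)

theorem hasFDerivAt_intervalIntegral_comp_add_smul {h : E → F} (hh : ContDiff ℝ 1 h)
    (hs : HasCompactSupport h) (w : E) (a b : ℝ) (x₀ : E) :
    HasFDerivAt (fun x => ∫ t in a..b, h (x + t • w))
      (∫ t in a..b, fderiv ℝ h (x₀ + t • w)) x₀ := by
  have hd : Continuous (fderiv ℝ h) := hh.continuous_fderiv one_ne_zero
  obtain ⟨C, hC⟩ := hd.bounded_above_of_compact_support (hs.fderiv (𝕜 := ℝ))
  refine intervalIntegral.hasFDerivAt_integral_of_dominated_of_fderiv_le (bound := fun _ => C)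
    (F' := fun x t => fderiv ℝ h (x + t • w))
    univ_mem (Eventually.of_forall fun x => ?_) ?_ ?_ (ae_of_all _ fun t _ x _ => hC _)
    intervalIntegrable_const (ae_of_all _ fun t _ x _ => ?_)
  · exact (hh.continuous.comp (by fun_prop)).aestronglyMeasurable
  · exact (hh.continuous.comp (by fun_prop)).intervalIntegrable _ _
  · exact (hd.comp (by fun_prop)).aestronglyMeasurable
  · have := (hh.differentiable one_ne_zero (x + t • w)).hasFDerivAt.comp x
      ((hasFDerivAt_id x).add_const (t • w))
    rwa [ContinuousLinearMap.comp_id] at this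

theorem contDiff_intervalIntegral_comp_add_smul {h : E → F} (hh : ContDiff ℝ 1 h)
    (hs : HasCompactSupport h) (w : E) (a b : ℝ) :
    ContDiff ℝ 1 (fun x => ∫ t in a..b, h (x + t • w)) := by
  have hd : Continuous (fderiv ℝ h) := hh.continuous_fderiv one_ne_zero
  rw [contDiff_one_iff_fderiv]
  refine ⟨fun x => (hasFDerivAt_intervalIntegral_comp_add_smul hh hs w a b x).differentiableAt, ?_⟩
  rw [funext fun x => (hasFDerivAt_intervalIntegral_comp_add_smul hh hs w a b x).fderiv]
  exact intervalIntegral.continuous_parametric_intervalIntegral_of_continuous' (by fun_prop) a b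

end Ray

section Beam

variable {w x : ℝ × ℝ} {h : ℝ × ℝ → ℝ}

theorem Xbeam_eq_intervalIntegral {T : ℝ} (hT : 0 ≤ T) (h0 : ∀ t, T < t → h (x + t • w) = 0) :
    Xbeam w h x = ∫ t in 0..T, h (x + t • w) := by
  rw [intervalIntegral.integral_of_le hT, Xbeam]
  exact setIntegral_eq_of_subset_of_forall_sdiff_eq_zero measurableSet_Ioi Ioc_subset_Ioi_self
    fun t ht => h0 t (not_le.1 fun hle => ht.2 ⟨ht.1, hle⟩)

theorem Xbeam_const_mul (a : ℝ) : Xbeam w (fun y => a * h y) x = a * Xbeam w h x :=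
  integral_const_mul a _

theorem contDiff_Xbeam (hh : ContDiff ℝ 1 h) (hs : HasCompactSupport h) (hw : w ≠ 0) :
    ContDiff ℝ 1 (Xbeam w h) := by
  refine contDiff_iff_contDiffAt.2 fun x₀ => ?_
  obtain ⟨T, hT, hev⟩ := hs.exists_eventually_apply_add_smul_eq_zero hw x₀
  refine (contDiff_intervalIntegral_comp_add_smul hh hs w 0 T).contDiffAt.congr_of_eventuallyEq ?_
  exact hev.mono fun y hy => Xbeam_eq_intervalIntegral hT fun t ht => hy t ht.le

theorem fderiv_Xbeam_apply_self (hh : ContDiff ℝ 1 h) (hs : HasCompactSupport h) (hw : w ≠ 0)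
    (x : ℝ × ℝ) : fderiv ℝ (Xbeam w h) x w = -h x := by
  obtain ⟨T, hT, hev⟩ := hs.exists_eventually_apply_add_smul_eq_zero hw x
  have hloc : Xbeam w h =ᶠ[𝓝 x] fun y => ∫ t in 0..T, h (y + t • w) :=
    hev.mono fun y hy => Xbeam_eq_intervalIntegral hT fun t ht => hy t ht.le
  have hint : IntervalIntegrable (fun t => fderiv ℝ h (x + t • w)) volume 0 T :=
    ((hh.continuous_fderiv one_ne_zero).comp (by fun_prop)).intervalIntegrable _ _
  rw [hloc.fderiv_eq, (hasFDerivAt_intervalIntegral_comp_add_smul hh hs w 0 T x).fderiv,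
    ContinuousLinearMap.intervalIntegral_apply hint, integral_fderiv_apply_add_smul hh,
    hev.self_of_nhds T le_rfl]
  simp

theorem Xbeam_fderiv_apply_eq_sub {φ : ℝ × ℝ → ℝ} (hφ : ContDiff ℝ 1 φ) {c : ℝ}
    (hc : ∀ᶠ t : ℝ in atTop, φ (x + t • w) = c) :
    Xbeam w (fun y => fderiv ℝ φ y w) x = c - φ x := by
  obtain ⟨T, hT⟩ := eventually_atTop.1 (hc.and (eventually_ge_atTop 0))
  have hzero : ∀ t, T < t → fderiv ℝ φ (x + t • w) w = 0 := fun t ht =>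
    (hasDerivAt_comp_add_smul (hφ.differentiable one_ne_zero _)).unique
      ((hasDerivAt_const t c).congr_of_eventuallyEq
        ((eventually_gt_nhds ht).mono fun s hs => (hT s hs.le).1))
  rw [Xbeam_eq_intervalIntegral (hT T le_rfl).2 hzero, integral_fderiv_apply_add_smul hφ,
    (hT T le_rfl).1]
  simp

end Beam

theorem SuppInDisc.apply_eq_zero_of_one_le_snd {h : ℝ × ℝ → ℝ} (hs : SuppInDisc h) {y : ℝ × ℝ}
    (hy : 1 ≤ y.2) : h y = 0 :=
  hs y (by nlinarith [sq_nonneg y.1])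

theorem SuppInDisc.hasCompactSupport {h : ℝ × ℝ → ℝ} (hs : SuppInDisc h) : HasCompactSupport h := by
  refine HasCompactSupport.intro (isCompact_closedBall (0 : ℝ × ℝ) 1) fun y hy => hs y ?_
  rw [Metric.mem_closedBall, dist_zero_right, Prod.norm_def, not_le, lt_max_iff,
    Real.norm_eq_abs, Real.norm_eq_abs] at hy
  rcases hy with hy | hy <;> nlinarith [sq_abs y.1, sq_abs y.2]

theorem eventually_one_lt_snd_add_smul {w : ℝ × ℝ} (hw : 0 < w.2) (x : ℝ × ℝ) :
    ∀ᶠ t : ℝ in atTop, 1 < (x + t • w).2 := by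
  have : Tendsto (fun t : ℝ => x.2 + t * w.2) atTop atTop :=
    tendsto_atTop_add_const_left _ _ (tendsto_id.atTop_mul_const hw)
  simpa using this.eventually_gt_atTop 1

theorem eq_of_fderiv_eq_zero_of_one_lt_snd {φ : ℝ × ℝ → ℝ} (hφ : Differentiable ℝ φ)
    (h0 : ∀ y : ℝ × ℝ, 1 < y.2 → fderiv ℝ φ y = 0) {y z : ℝ × ℝ} (hy : 1 < y.2) (hz : 1 < z.2) :
    φ y = φ z :=
  (isOpen_univ.prod isOpen_Ioi).is_const_of_fderiv_eq_zero
    (convex_univ.prod (convex_Ioi 1)).isPreconnected hφ.differentiableOn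
    (fun p hp => h0 p hp.2) (show y ∈ univ ×ˢ Ioi 1 from ⟨mem_univ _, hy⟩)
    (show z ∈ univ ×ˢ Ioi 1 from ⟨mem_univ _, hz⟩)

theorem ContinuousLinearMap.apply_eq_fst_mul_add_snd_mul (L : ℝ × ℝ →L[ℝ] ℝ) (y : ℝ × ℝ) :
    L y = y.1 * L (1, 0) + y.2 * L (0, 1) := by
  conv_lhs => rw [show y = y.1 • ((1 : ℝ), (0 : ℝ)) + y.2 • ((0 : ℝ), (1 : ℝ)) by ext <;> simp]
  rw [map_add, map_smul, map_smul, smul_eq_mul, smul_eq_mul]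

theorem ContinuousLinearMap.apply_basis_of_apply_mirror {L : ℝ × ℝ →L[ℝ] ℝ} {a b p q : ℝ}
    (ha : a ≠ 0) (hb : b ≠ 0) (hpos : L (a, b) = a * p + b * q)
    (hneg : L (-a, b) = -a * p + b * q) : L (1, 0) = p ∧ L (0, 1) = q := by
  rw [L.apply_eq_fst_mul_add_snd_mul] at hpos hneg
  constructor
  · exact mul_left_cancel₀ ha (by linear_combination (hpos - hneg) / 2)
  · exact mul_left_cancel₀ hb (by linear_combination (hpos + hneg) / 2)

def contractTensor (f11 f12 f22 : ℝ × ℝ → ℝ) (w : ℝ × ℝ) (y : ℝ × ℝ) : ℝ :=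
  w.1 ^ 2 * f11 y + 2 * w.1 * w.2 * f12 y + w.2 ^ 2 * f22 y

section VLine

variable {u1 u2 : ℝ} {f11 f12 f22 : ℝ × ℝ → ℝ}

theorem VlineL_eq (u1 u2 : ℝ) (f11 f12 f22 : ℝ × ℝ → ℝ) :
    VlineL u1 u2 f11 f12 f22 = Xbeam (u1, u2) (contractTensor f11 f12 f22 (u1, u2))
      + Xbeam (-u1, u2) (contractTensor f11 f12 f22 (-u1, u2)) := by
  unfold VlineL contractTensor
  congr 2
  funext y
  ring

theorem contDiff_contractTensor {n : WithTop ℕ∞} (h11 : ContDiff ℝ n f11)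
    (h12 : ContDiff ℝ n f12) (h22 : ContDiff ℝ n f22) (w : ℝ × ℝ) :
    ContDiff ℝ n (contractTensor f11 f12 f22 w) := by
  unfold contractTensor
  fun_prop

theorem hasCompactSupport_contractTensor (s11 : HasCompactSupport f11)
    (s12 : HasCompactSupport f12) (s22 : HasCompactSupport f22) (w : ℝ × ℝ) :
    HasCompactSupport (contractTensor f11 f12 f22 w) :=
  (s11.mul_left.add s12.mul_left).add s22.mul_left

theorem exists_potential_of_VlineL_eq_zero (hu1 : u1 ≠ 0) (hu2 : u2 ≠ 0)
    (h11 : ContDiff ℝ 1 f11) (h12 : ContDiff ℝ 1 f12) (h22 : ContDiff ℝ 1 f22)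
    (s11 : HasCompactSupport f11) (s12 : HasCompactSupport f12) (s22 : HasCompactSupport f22)
    (hL : VlineL u1 u2 f11 f12 f22 = 0) :
    ∃ φ : ℝ × ℝ → ℝ, ContDiff ℝ 1 φ ∧ ∀ x : ℝ × ℝ,
      fderiv ℝ φ x ((1 : ℝ), (0 : ℝ)) = u1 ^ 2 * f11 x + u2 ^ 2 * f22 x ∧
      fderiv ℝ φ x ((0 : ℝ), (1 : ℝ)) = 2 * u1 ^ 2 * f12 x := by
  have hg := contDiff_contractTensor h11 h12 h22
  have sg := hasCompactSupport_contractTensor s11 s12 s22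
  have hu : ((u1, u2) : ℝ × ℝ) ≠ 0 := fun h => hu1 (congrArg Prod.fst h)
  have hv : ((-u1, u2) : ℝ × ℝ) ≠ 0 := fun h => hu1 (neg_eq_zero.1 (congrArg Prod.fst h))
  have hX : Xbeam (u1, u2) (contractTensor f11 f12 f22 (u1, u2))
      = -Xbeam (-u1, u2) (contractTensor f11 f12 f22 (-u1, u2)) :=
    eq_neg_of_add_eq_zero_left (by rw [← VlineL_eq, hL])
  have hdiff := (contDiff_Xbeam (hg (u1, u2)) (sg (u1, u2)) hu).differentiable one_ne_zero
  refine ⟨fun y => -u1 * Xbeam (u1, u2) (contractTensor f11 f12 f22 (u1, u2)) y,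
    contDiff_const.mul (contDiff_Xbeam (hg _) (sg _) hu), fun x => ?_⟩
  rw [fderiv_const_mul (hdiff x)]
  refine ContinuousLinearMap.apply_basis_of_apply_mirror hu1 hu2 ?_ ?_
  · rw [smul_apply, fderiv_Xbeam_apply_self (hg _) (sg _) hu, contractTensor]
    simp only [smul_eq_mul]
    ring
  · rw [smul_apply, hX, fderiv_neg, neg_apply,
      fderiv_Xbeam_apply_self (hg _) (sg _) hv, contractTensor]
    simp only [smul_eq_mul]
    ring

theorem VlineL_eq_zero_of_potential (hu1 : u1 ≠ 0) (hu2 : 0 < u2)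
    (s11 : SuppInDisc f11) (s12 : SuppInDisc f12) (s22 : SuppInDisc f22)
    {φ : ℝ × ℝ → ℝ} (hφ : ContDiff ℝ 1 φ) (hgrad : ∀ x : ℝ × ℝ,
      fderiv ℝ φ x ((1 : ℝ), (0 : ℝ)) = u1 ^ 2 * f11 x + u2 ^ 2 * f22 x ∧
      fderiv ℝ φ x ((0 : ℝ), (1 : ℝ)) = 2 * u1 ^ 2 * f12 x) :
    VlineL u1 u2 f11 f12 f22 = 0 := by
  have hzero : ∀ y : ℝ × ℝ, 1 < y.2 → fderiv ℝ φ y = 0 := fun y hy => by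
    refine ContinuousLinearMap.ext fun z => ?_
    rw [ContinuousLinearMap.apply_eq_fst_mul_add_snd_mul, (hgrad y).1, (hgrad y).2,
      s11.apply_eq_zero_of_one_le_snd hy.le, s12.apply_eq_zero_of_one_le_snd hy.le,
      s22.apply_eq_zero_of_one_le_snd hy.le]
    simp
  have hray (w : ℝ × ℝ) (hw : 0 < w.2) (x : ℝ × ℝ) :
      Xbeam w (fun y => fderiv ℝ φ y w) x = φ (0, 2) - φ x :=
    Xbeam_fderiv_apply_eq_sub hφ ((eventually_one_lt_snd_add_smul hw x).mono fun t ht =>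
      eq_of_fderiv_eq_zero_of_one_lt_snd (hφ.differentiable one_ne_zero) hzero ht (by norm_num))
  have hdir (a : ℝ) (ha : a ^ 2 = u1 ^ 2) :
      (fun y => fderiv ℝ φ y (a, u2)) = fun y => a * contractTensor f11 f12 f22 (a, u2) y := by
    funext y
    rw [ContinuousLinearMap.apply_eq_fst_mul_add_snd_mul, (hgrad y).1, (hgrad y).2,
      contractTensor, ← ha]
    ring
  funext x
  have hpos := hray (u1, u2) hu2 x
  have hneg := hray (-u1, u2) hu2 x
  rw [hdir u1 rfl, Xbeam_const_mul] at hpos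
  rw [hdir (-u1) (neg_sq u1), Xbeam_const_mul] at hneg
  rw [VlineL_eq, Pi.add_apply, Pi.zero_apply]
  exact mul_left_cancel₀ hu1 (by linear_combination hpos - hneg)

end VLine

theorem kernel_longitudinal_general
    (u1 u2 : ℝ) (hu1 : 0 < u1) (hu2 : 0 < u2)
    (f11 f12 f22 : ℝ × ℝ → ℝ)
    (h11 : ContDiff ℝ 2 f11) (h12 : ContDiff ℝ 2 f12) (h22 : ContDiff ℝ 2 f22)
    (s11 : SuppInDisc f11) (s12 : SuppInDisc f12) (s22 : SuppInDisc f22) :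
    (∀ x : ℝ × ℝ, VlineL u1 u2 f11 f12 f22 x = 0) ↔
      ∃ φ : ℝ × ℝ → ℝ, ContDiff ℝ 1 φ ∧
        ∀ x : ℝ × ℝ,
          fderiv ℝ φ x ((1 : ℝ), (0 : ℝ)) = u1 ^ 2 * f11 x + u2 ^ 2 * f22 x ∧
          fderiv ℝ φ x ((0 : ℝ), (1 : ℝ)) = 2 * u1 ^ 2 * f12 x := by
  constructor
  · intro hL
    exact exists_potential_of_VlineL_eq_zero hu1.ne' hu2.ne' (h11.of_le one_le_two)
      (h12.of_le one_le_two) (h22.of_le one_le_two) s11.hasCompactSupport s12.hasCompactSupport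
      s22.hasCompactSupport (funext hL)
  · rintro ⟨φ, hφ, hgrad⟩
    exact congrFun (VlineL_eq_zero_of_potential hu1.ne' hu2 s11 s12 s22 hφ hgrad)

/-- kernel description of the longitudinal V-line transform. -/
theorem kernel_longitudinal
    (u1 u2 : ℝ) (hu : u1 ^ 2 + u2 ^ 2 = 1) (hu1 : 0 < u1) (hu2 : 0 < u2)
    (f11 f12 f22 : ℝ × ℝ → ℝ)
    (h11 : ContDiff ℝ 2 f11) (h12 : ContDiff ℝ 2 f12) (h22 : ContDiff ℝ 2 f22)
    (s11 : SuppInDisc f11) (s12 : SuppInDisc f12) (s22 : SuppInDisc f22) :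
    (∀ x : ℝ × ℝ, VlineL u1 u2 f11 f12 f22 x = 0) ↔
      ∃ φ : ℝ × ℝ → ℝ, ContDiff ℝ 1 φ ∧
        ∀ x : ℝ × ℝ,
          fderiv ℝ φ x ((1 : ℝ), (0 : ℝ)) = u1 ^ 2 * f11 x + u2 ^ 2 * f22 x ∧
          fderiv ℝ φ x ((0 : ℝ), (1 : ℝ)) = 2 * u1 ^ 2 * f12 x :=
  kernel_longitudinal_general u1 u2 hu1 hu2 f11 f12 f22 h11 h12 h22 s11 s12 s22
end
end

section
/- Let g = (g1, g2) be a vector field on ℝ² whose components are twice continuously differentiable and compactly supported, and let f = d⊥ g be the symmetric 2-tensor field with components f11 = −∂g1/∂x2, f12 = (1/2)(∂g1/∂x1 − ∂g2/∂x2), f22 = ∂g2/∂x1. Then for every x ∈ ℝ²: Tf(x) = 2 u2 g1(x), and Mf(x) = −2 u2 g2(x) − (1/2)[X_u(∂g1/∂x1 + ∂g2/∂x2)(x) + X_v(∂g1/∂x1 + ∂g2/∂x2)(x)]. -/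
/-!
For `f = d^⊥ g` and a direction `w`, the integrands of the V-line transforms along `w` are
derivatives in the direction `w`: `⟨f, w^⊥ ⊗ w^⊥⟩ = D_w ⟨w^⊥, g⟩` and
`⟨f, w^⊥ ⊗ w⟩ = D_w ⟨w, g⟩ - |w|² / 2 · div g`. As `g` has compact support, the fundamental
theorem of calculus along the ray `x + ℝ₊ w` gives `X_w (D_w h) = -h x`, and summing over the
two branches `u` and `v` of the V-line gives both formulas.
-/

noncomputable section

open MeasureTheory

open Filter Set

section Ray

variable {E β : Type*} [NormedAddCommGroup E] [NormedSpace ℝ E]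

theorem HasCompactSupport.comp_ray [Zero β] {F : E → β} (hF : HasCompactSupport F) {w : E}
    (hw : w ≠ 0) (x : E) : HasCompactSupport fun t : ℝ => F (x + t • w) :=
  hF.comp_isClosedEmbedding
    ((Homeomorph.addLeft x).isClosedEmbedding.comp (isClosedEmbedding_smul_left hw))

theorem integrable_fderiv_apply_comp_ray {g : E → ℝ} (hg : ContDiff ℝ 1 g)
    (hc : HasCompactSupport g) {w : E} (hw : w ≠ 0) (v x : E) :
    Integrable fun t : ℝ => fderiv ℝ g (x + t • w) v := by
  refine Continuous.integrable_of_hasCompactSupport ?_ ((hc.fderiv_apply ℝ v).comp_ray hw x)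
  exact ((hg.continuous_fderiv one_ne_zero).comp (by fun_prop)).clm_apply continuous_const

theorem integral_Ioi_fderiv_apply_comp_ray {g : E → ℝ} (hg : ContDiff ℝ 1 g)
    (hc : HasCompactSupport g) {w : E} (hw : w ≠ 0) (x : E) :
    ∫ t in Ioi (0 : ℝ), fderiv ℝ g (x + t • w) w = -g x := by
  have hderiv : ∀ t ∈ Ici (0 : ℝ),
      HasDerivAt (fun s : ℝ => g (x + s • w)) (fderiv ℝ g (x + t • w) w) t := fun t _ => by
    have hray : HasDerivAt (fun s : ℝ => x + s • w) w t := by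
      simpa using ((hasDerivAt_id t).smul_const w).const_add x
    exact ((hg.differentiable one_ne_zero) _).hasFDerivAt.comp_hasDerivAt t hray
  have hlim : Tendsto (fun t : ℝ => g (x + t • w)) atTop (nhds 0) :=
    (hc.comp_ray hw x).is_zero_at_infty.mono_left atTop_le_cocompact
  simpa using integral_Ioi_of_hasDerivAt_of_tendsto' hderiv
    (integrable_fderiv_apply_comp_ray hg hc hw w x).integrableOn hlim

end Ray

theorem ContinuousLinearMap.apply_mk_eq (L : ℝ × ℝ →L[ℝ] ℝ) (a b : ℝ) :
    L (a, b) = a * L (1, 0) + b * L (0, 1) := by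
  have h : ((a, b) : ℝ × ℝ) = a • ((1 : ℝ), (0 : ℝ)) + b • ((0 : ℝ), (1 : ℝ)) := by
    simp [Prod.smul_def]
  rw [h, map_add, map_smul, map_smul, smul_eq_mul, smul_eq_mul]

theorem prod_mk_ne_zero_of_sq_add_sq_eq_one {a b : ℝ} (h : a ^ 2 + b ^ 2 = 1) :
    ((a, b) : ℝ × ℝ) ≠ 0 := by
  rintro ⟨rfl, rfl⟩
  norm_num at h

/-- `⟨f, w^⊥ ⊗ w^⊥⟩` for `w = (a, b)` and `w^⊥ = (-b, a)`. -/
def transverseComp (a b : ℝ) (f11 f12 f22 : ℝ × ℝ → ℝ) (y : ℝ × ℝ) : ℝ :=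
  b ^ 2 * f11 y - 2 * a * b * f12 y + a ^ 2 * f22 y

/-- `⟨f, w^⊥ ⊗ w⟩` for `w = (a, b)` and `w^⊥ = (-b, a)`. -/
def mixedComp (a b : ℝ) (f11 f12 f22 : ℝ × ℝ → ℝ) (y : ℝ × ℝ) : ℝ :=
  -(a * b) * f11 y + (a ^ 2 - b ^ 2) * f12 y + a * b * f22 y

theorem VlineT_eq_add (u1 u2 : ℝ) (f11 f12 f22 : ℝ × ℝ → ℝ) :
    VlineT u1 u2 f11 f12 f22 = Xbeam (u1, u2) (transverseComp u1 u2 f11 f12 f22)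
      + Xbeam (-u1, u2) (transverseComp (-u1) u2 f11 f12 f22) := by
  unfold VlineT transverseComp
  congr 3
  funext y
  ring

theorem VlineM_eq_add (u1 u2 : ℝ) (f11 f12 f22 : ℝ × ℝ → ℝ) :
    VlineM u1 u2 f11 f12 f22 = Xbeam (u1, u2) (mixedComp u1 u2 f11 f12 f22)
      + Xbeam (-u1, u2) (mixedComp (-u1) u2 f11 f12 f22) := by
  unfold VlineM mixedComp
  congr 3
  funext y
  ring

def dPerp11 (g1 : ℝ × ℝ → ℝ) (y : ℝ × ℝ) : ℝ := -fderiv ℝ g1 y (0, 1)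

def dPerp12 (g1 g2 : ℝ × ℝ → ℝ) (y : ℝ × ℝ) : ℝ :=
  (1 / 2) * (fderiv ℝ g1 y (1, 0) - fderiv ℝ g2 y (0, 1))

def dPerp22 (g2 : ℝ × ℝ → ℝ) (y : ℝ × ℝ) : ℝ := fderiv ℝ g2 y (1, 0)

def divergence2 (g1 g2 : ℝ × ℝ → ℝ) (y : ℝ × ℝ) : ℝ :=
  fderiv ℝ g1 y (1, 0) + fderiv ℝ g2 y (0, 1)

section SolenoidalField

variable {g1 g2 : ℝ × ℝ → ℝ}

theorem transverseComp_dPerp (a b : ℝ) (y : ℝ × ℝ) :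
    transverseComp a b (dPerp11 g1) (dPerp12 g1 g2) (dPerp22 g2) y
      = -b * fderiv ℝ g1 y (a, b) + a * fderiv ℝ g2 y (a, b) := by
  simp only [transverseComp, dPerp11, dPerp12, dPerp22, ContinuousLinearMap.apply_mk_eq _ a b]
  ring

theorem mixedComp_dPerp (a b : ℝ) (y : ℝ × ℝ) :
    mixedComp a b (dPerp11 g1) (dPerp12 g1 g2) (dPerp22 g2) y
      = a * fderiv ℝ g1 y (a, b) + b * fderiv ℝ g2 y (a, b)
        - (a ^ 2 + b ^ 2) / 2 * divergence2 g1 g2 y := by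
  simp only [mixedComp, dPerp11, dPerp12, dPerp22, divergence2,
    ContinuousLinearMap.apply_mk_eq _ a b]
  ring

theorem Xbeam_fderiv_linear_comb (hg1 : ContDiff ℝ 1 g1) (hg2 : ContDiff ℝ 1 g2)
    (hc1 : HasCompactSupport g1) (hc2 : HasCompactSupport g2) {w : ℝ × ℝ} (hw : w ≠ 0)
    (c1 c2 : ℝ) (x : ℝ × ℝ) :
    Xbeam w (fun y => c1 * fderiv ℝ g1 y w + c2 * fderiv ℝ g2 y w) x
      = -(c1 * g1 x + c2 * g2 x) := by
  have hderiv (y : ℝ × ℝ) : fderiv ℝ (fun z => c1 * g1 z + c2 * g2 z) y w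
      = c1 * fderiv ℝ g1 y w + c2 * fderiv ℝ g2 y w := by
    have hd1 := (hg1.differentiable one_ne_zero y).const_mul c1
    have hd2 := (hg2.differentiable one_ne_zero y).const_mul c2
    rw [fderiv_fun_add hd1 hd2, fderiv_const_mul (hg1.differentiable one_ne_zero y),
      fderiv_const_mul (hg2.differentiable one_ne_zero y)]
    rfl
  simp only [Xbeam, ← hderiv]
  exact integral_Ioi_fderiv_apply_comp_ray ((contDiff_const.mul hg1).add (contDiff_const.mul hg2))
    (hc1.mul_left.add hc2.mul_left) hw x

theorem Xbeam_transverseComp_dPerp (hg1 : ContDiff ℝ 1 g1) (hg2 : ContDiff ℝ 1 g2)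
    (hc1 : HasCompactSupport g1) (hc2 : HasCompactSupport g2) {a b : ℝ}
    (hw : ((a, b) : ℝ × ℝ) ≠ 0) (x : ℝ × ℝ) :
    Xbeam (a, b) (transverseComp a b (dPerp11 g1) (dPerp12 g1 g2) (dPerp22 g2)) x
      = b * g1 x - a * g2 x := by
  rw [funext (transverseComp_dPerp a b), Xbeam_fderiv_linear_comb hg1 hg2 hc1 hc2 hw]
  ring

theorem Xbeam_mixedComp_dPerp (hg1 : ContDiff ℝ 1 g1) (hg2 : ContDiff ℝ 1 g2)
    (hc1 : HasCompactSupport g1) (hc2 : HasCompactSupport g2) {a b : ℝ}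
    (hw : ((a, b) : ℝ × ℝ) ≠ 0) (x : ℝ × ℝ) :
    Xbeam (a, b) (mixedComp a b (dPerp11 g1) (dPerp12 g1 g2) (dPerp22 g2)) x
      = -(a * g1 x + b * g2 x) - (a ^ 2 + b ^ 2) / 2 * Xbeam (a, b) (divergence2 g1 g2) x := by
  have hint {g : ℝ × ℝ → ℝ} (hg : ContDiff ℝ 1 g) (hc : HasCompactSupport g)
      (v : ℝ × ℝ) := integrable_fderiv_apply_comp_ray hg hc hw v x
  rw [← Xbeam_fderiv_linear_comb hg1 hg2 hc1 hc2 hw]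
  simp only [Xbeam, mixedComp_dPerp, divergence2]
  rw [← integral_const_mul]
  exact integral_sub
    (((hint hg1 hc1 _).const_mul a).add ((hint hg2 hc2 _).const_mul b)).integrableOn
    (((hint hg1 hc1 _).add (hint hg2 hc2 _)).const_mul _).integrableOn

end SolenoidalField

theorem solenoidal_field_T_and_M_general
    (u1 u2 : ℝ) (hu : u1 ^ 2 + u2 ^ 2 = 1)
    (g1 g2 : ℝ × ℝ → ℝ)
    (hg1 : ContDiff ℝ 2 g1) (hg2 : ContDiff ℝ 2 g2)
    (hc1 : HasCompactSupport g1) (hc2 : HasCompactSupport g2)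
    (f11 f12 f22 : ℝ × ℝ → ℝ)
    (hf11 : ∀ y : ℝ × ℝ, f11 y = -fderiv ℝ g1 y ((0 : ℝ), (1 : ℝ)))
    (hf12 : ∀ y : ℝ × ℝ, f12 y =
      (1 / 2) * (fderiv ℝ g1 y ((1 : ℝ), (0 : ℝ)) - fderiv ℝ g2 y ((0 : ℝ), (1 : ℝ))))
    (hf22 : ∀ y : ℝ × ℝ, f22 y = fderiv ℝ g2 y ((1 : ℝ), (0 : ℝ)))
    (x : ℝ × ℝ) :
    VlineT u1 u2 f11 f12 f22 x = 2 * u2 * g1 x ∧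
    VlineM u1 u2 f11 f12 f22 x =
      -(2 * u2) * g2 x -
        (1 / 2) *
          (Xbeam (u1, u2)
              (fun y => fderiv ℝ g1 y ((1 : ℝ), (0 : ℝ)) + fderiv ℝ g2 y ((0 : ℝ), (1 : ℝ))) x +
            Xbeam (-u1, u2)
              (fun y => fderiv ℝ g1 y ((1 : ℝ), (0 : ℝ)) + fderiv ℝ g2 y ((0 : ℝ), (1 : ℝ))) x) := by
  have hv : (-u1) ^ 2 + u2 ^ 2 = 1 := by rwa [neg_sq]
  have hu_ne := prod_mk_ne_zero_of_sq_add_sq_eq_one hu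
  have hv_ne := prod_mk_ne_zero_of_sq_add_sq_eq_one hv
  have hg1' : ContDiff ℝ 1 g1 := hg1.of_le one_le_two
  have hg2' : ContDiff ℝ 1 g2 := hg2.of_le one_le_two
  obtain rfl : f11 = dPerp11 g1 := funext hf11
  obtain rfl : f12 = dPerp12 g1 g2 := funext hf12
  obtain rfl : f22 = dPerp22 g2 := funext hf22
  simp only [VlineT_eq_add, VlineM_eq_add, Pi.add_apply,
    Xbeam_transverseComp_dPerp hg1' hg2' hc1 hc2 hu_ne,
    Xbeam_transverseComp_dPerp hg1' hg2' hc1 hc2 hv_ne,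
    Xbeam_mixedComp_dPerp hg1' hg2' hc1 hc2 hu_ne, Xbeam_mixedComp_dPerp hg1' hg2' hc1 hc2 hv_ne,
    hu, hv]
  unfold divergence2
  constructor <;> ring

/-- the transverse and mixed V-line transforms of a solenoidal
tensor field `f = d⊥ g`. -/
theorem solenoidal_field_T_and_M
    (u1 u2 : ℝ) (hu : u1 ^ 2 + u2 ^ 2 = 1) (hu1 : 0 < u1) (hu2 : 0 < u2)
    (g1 g2 : ℝ × ℝ → ℝ)
    (hg1 : ContDiff ℝ 2 g1) (hg2 : ContDiff ℝ 2 g2)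
    (hc1 : HasCompactSupport g1) (hc2 : HasCompactSupport g2)
    (f11 f12 f22 : ℝ × ℝ → ℝ)
    (hf11 : ∀ y : ℝ × ℝ, f11 y = -fderiv ℝ g1 y ((0 : ℝ), (1 : ℝ)))
    (hf12 : ∀ y : ℝ × ℝ, f12 y =
      (1 / 2) * (fderiv ℝ g1 y ((1 : ℝ), (0 : ℝ)) - fderiv ℝ g2 y ((0 : ℝ), (1 : ℝ))))
    (hf22 : ∀ y : ℝ × ℝ, f22 y = fderiv ℝ g2 y ((1 : ℝ), (0 : ℝ)))
    (x : ℝ × ℝ) :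
    VlineT u1 u2 f11 f12 f22 x = 2 * u2 * g1 x ∧
    VlineM u1 u2 f11 f12 f22 x =
      -(2 * u2) * g2 x -
        (1 / 2) *
          (Xbeam (u1, u2)
              (fun y => fderiv ℝ g1 y ((1 : ℝ), (0 : ℝ)) + fderiv ℝ g2 y ((0 : ℝ), (1 : ℝ))) x +
            Xbeam (-u1, u2)
              (fun y => fderiv ℝ g1 y ((1 : ℝ), (0 : ℝ)) + fderiv ℝ g2 y ((0 : ℝ), (1 : ℝ))) x) :=
  solenoidal_field_T_and_M_general u1 u2 hu g1 g2 hg1 hg2 hc1 hc2 f11 f12 f22 hf11 hf12 hf22 x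
end
end
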